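/- arXiv:2209.05909 — 4 statements merged into one kernel-verified Lean document; each statement's English description precedes it below -/
import Mathlib

section
/- Let G be a directed graph with target vertex s, current stack S (a set of vertices) with top vertex u, and a correct block assignment with respect to S. Suppose p is a path from u to s with len(p) ≤ k − len(S), and no vertex of p except possibly u belongs to S. Then for every vertex x on p other than u, the pruning condition len(S') + 1 + x.block ≤ k is satisfiable along p; formally, for each such x with suffix length p[x], we have x.block ≤ p[x], so the DFS with block-based pruning reaches s along p. -/
variable {V : Type*}

/-- A closed walk of length `h` in a directed graph with edge relation `E`:
`w 0, w 1, …, w h` with consecutive edges and `w 0 = w h`. -/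
def IsClosedWalk (E : V → V → Prop) (h : ℕ) (w : ℕ → V) : Prop :=
  (∀ i < h, E (w i) (w (i + 1))) ∧ w 0 = w h

/-- A simple cycle of length `h`: a closed walk whose first `h` vertices are pairwise distinct. -/
def IsSimpleCycle (E : V → V → Prop) (h : ℕ) (w : ℕ → V) : Prop :=
  IsClosedWalk E h w ∧ ∀ a < h, ∀ b < h, w a = w b → a = b

theorem block_le_length_of_suffix (E : V → V → Prop) (s : V) (S : Set V)
    (block : V → ℕ)
    (hcorrect : ∀ (x : V) (L : ℕ) (w : ℕ → V), w 0 = x → w L = s →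
      (∀ i < L, E (w i) (w (i + 1))) → (∀ i ≤ L, w i ∉ S) → block x ≤ L)
    {L j : ℕ} {w : ℕ → V} (hjL : j ≤ L) (hL : w L = s)
    (hE : ∀ i, j ≤ i → i < L → E (w i) (w (i + 1)))
    (hS : ∀ i, j ≤ i → i ≤ L → w i ∉ S) :
    block (w j) ≤ L - j := by
  refine hcorrect (w j) (L - j) (fun i => w (j + i)) rfl ?_ ?_ ?_
  · simpa only [Nat.add_sub_cancel' hjL] using hL
  · exact fun i hi => hE (j + i) (by omega) (by omega)
  · exact fun i hi => hS (j + i) (by omega) (by omega)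

theorem stmt7_general (E : V → V → Prop) (s : V) (S : Set V) (k d : ℕ) (block : V → ℕ)
    (hcorrect : ∀ (x : V) (L : ℕ) (w : ℕ → V), w 0 = x → w L = s →
      (∀ i < L, E (w i) (w (i + 1))) → (∀ i ≤ L, w i ∉ S) → block x ≤ L)
    (L : ℕ) (w : ℕ → V)
    (hL : w L = s) (hE : ∀ i < L, E (w i) (w (i + 1)))
    (hS : ∀ i, 1 ≤ i → i ≤ L → w i ∉ S)
    (hbudget : L ≤ k - d) :
    ∀ j, 1 ≤ j → j ≤ L → block (w j) ≤ L - j ∧ d + j + block (w j) ≤ k := by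
  intro j hj1 hjL
  have hblock : block (w j) ≤ L - j :=
    block_le_length_of_suffix E s S block hcorrect hjL hL (fun i _ hi => hE i hi)
      (fun i hi hiL => hS i (by omega) hiL)
  -- `1 ≤ j ≤ L ≤ k - d` forces `d < k`, so the truncated subtraction in the budget is exact.
  exact ⟨hblock, by omega⟩

/-- Sufficiency of budget and correct blocks for reachability in the
block-pruned DFS: if the current stack has length d with top vertex u, block values
are correct w.r.t. the stack set S, and p is a path from u to s of length
L ≤ k − d whose vertices other than u avoid S, then every vertex x = w j (j ≥ 1) on p
satisfies block x ≤ p[x] = L − j, hence the pruning condition d + j + block x ≤ k holds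
along p, so the DFS reaches s along p. -/
theorem stmt7 (E : V → V → Prop) (s : V) (S : Set V) (k d : ℕ) (block : V → ℕ)
    (hcorrect : ∀ (x : V) (L : ℕ) (w : ℕ → V), w 0 = x → w L = s →
      (∀ i < L, E (w i) (w (i + 1))) → (∀ i ≤ L, w i ∉ S) → block x ≤ L)
    (u : V) (hu : u ∈ S) (L : ℕ) (w : ℕ → V)
    (h0 : w 0 = u) (hL : w L = s) (hE : ∀ i < L, E (w i) (w (i + 1)))
    (hS : ∀ i, 1 ≤ i → i ≤ L → w i ∉ S)
    (hbudget : L ≤ k - d) (hdk : d ≤ k) :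
    ∀ j, 1 ≤ j → j ≤ L → block (w j) ≤ L - j ∧ d + j + block (w j) ≤ k :=
  stmt7_general E s S k d block hcorrect L w hL hE hS hbudget
end

section
/- In the top-down algorithm, the returned set R is a feasible hop-constrained cycle cover: starting from R = V(G) and G₀ = ∅, after processing each vertex v (inserting v's edges into G₀, removing v from R and keeping its edges iff no simple cycle of length 3 to k through v exists in G₀, otherwise keeping v in R and deleting v's edges from G₀), the final R intersects every simple cycle of G of length between 3 and k, and R is minimal. -/
variable {V : Type*}

open scoped Classical

/-- A hop-constrained cycle cover: a vertex set meeting every simple cycle of length 3..k. -/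
def HopCycleCover (E : V → V → Prop) (k : ℕ) (C : Set V) : Prop :=
  ∀ (h : ℕ) (w : ℕ → V), 3 ≤ h → h ≤ k → IsSimpleCycle E h w → ∃ i ≤ h, w i ∈ C

/-- There is a simple cycle of length 3..k through `v` in the graph with the
vertices of `T` deleted. -/
def HasHopCycleThrough (E : V → V → Prop) (k : ℕ) (T : Set V) (v : V) : Prop :=
  ∃ (h : ℕ) (w : ℕ → V), 3 ≤ h ∧ h ≤ k ∧ IsSimpleCycle E h w ∧ w 0 = v ∧ ∀ i ≤ h, w i ∉ T


/-- One step of the top-down process at vertex `v`: keep `v` in the current cover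
set `R` iff there is a simple cycle of length 3..k through `v` in the current graph
G₀ + v (i.e. the graph with all vertices of `R` except `v` deleted); otherwise
remove `v` from `R`. -/
noncomputable def topDownStep (E : V → V → Prop) (k : ℕ) (R : Set V) (v : V) : Set V :=
  if HasHopCycleThrough E k (R \ {v}) v then R else R \ {v}

/-!
Feasibility is preserved by every step: a vertex `v` is dropped only when no short cycle through
`v` avoids the rest of the current set, so a short cycle met by the current set is still met after
`v` is dropped. Minimality: a vertex that is kept had, when it was processed, a short cycle through
it avoiding every other vertex of the then-current set, and the set only shrinks afterwards, so
that cycle witnesses that the final set minus `v` is not a cover.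
-/

variable {E : V → V → Prop} {k h : ℕ} {w : ℕ → V}

theorem IsSimpleCycle.rotate (hw : IsSimpleCycle E h w) (j : ℕ) :
    IsSimpleCycle E h (fun i => w ((j + i) % h)) := by
  obtain ⟨⟨hedge, hclose⟩, hinj⟩ := hw
  refine ⟨⟨fun i hi => ?_, by simp⟩, fun a ha b hb hab => ?_⟩
  · have hsucc : (j + (i + 1)) % h = ((j + i) % h + 1) % h := by
      rw [← Nat.add_assoc, Nat.mod_add_mod]
    have hlt : (j + i) % h < h := Nat.mod_lt _ (by omega)
    simp only [hsucc]
    generalize (j + i) % h = a at hlt ⊢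
    rcases Nat.lt_or_ge (a + 1) h with hc | hc
    · rw [Nat.mod_eq_of_lt hc]
      exact hedge a hlt
    · -- the rotated walk wraps around through `w h = w 0`
      obtain rfl : h = a + 1 := by omega
      rw [Nat.mod_self, hclose]
      exact hedge a hlt
  · have hmod : (j + a) % h = (j + b) % h :=
      hinj _ (Nat.mod_lt _ (by omega)) _ (Nat.mod_lt _ (by omega)) hab
    have := Nat.ModEq.add_left_cancel' j hmod
    rwa [Nat.ModEq, Nat.mod_eq_of_lt ha, Nat.mod_eq_of_lt hb] at this

theorem hasHopCycleThrough_of_isSimpleCycle {T : Set V} (h3 : 3 ≤ h) (hk : h ≤ k)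
    (hw : IsSimpleCycle E h w) (hT : ∀ i ≤ h, w i ∉ T) {i : ℕ} (hi : i ≤ h) :
    HasHopCycleThrough E k T (w i) := by
  obtain ⟨j, hj, hji⟩ : ∃ j < h, w j = w i := by
    rcases hi.lt_or_eq with hi | rfl
    · exact ⟨i, hi, rfl⟩
    · exact ⟨0, by omega, hw.1.2⟩
  refine ⟨h, _, h3, hk, hw.rotate j, by simpa [Nat.mod_eq_of_lt hj] using hji, fun m _ => ?_⟩
  exact hT _ (Nat.mod_lt _ (by omega)).le

theorem HasHopCycleThrough.mono {S T : Set V} {v : V} (hT : HasHopCycleThrough E k T v)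
    (hST : S ⊆ T) : HasHopCycleThrough E k S v := by
  obtain ⟨h, w, h3, hk, hw, h0, hwT⟩ := hT
  exact ⟨h, w, h3, hk, hw, h0, fun i hi hiS => hwT i hi (hST hiS)⟩

theorem HasHopCycleThrough.not_hopCycleCover {T : Set V} {v : V}
    (hT : HasHopCycleThrough E k T v) : ¬ HopCycleCover E k T := by
  obtain ⟨h, w, h3, hk, hw, -, hwT⟩ := hT
  intro hcov
  obtain ⟨i, hi, hiT⟩ := hcov h w h3 hk hw
  exact hwT i hi hiT

theorem topDownStep_subset (R : Set V) (v : V) : topDownStep E k R v ⊆ R := by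
  unfold topDownStep
  split
  · exact subset_rfl
  · exact Set.sdiff_subset

theorem foldl_topDownStep_subset (l : List V) (R : Set V) :
    l.foldl (topDownStep E k) R ⊆ R := by
  induction l generalizing R with
  | nil => exact subset_rfl
  | cons a t ih => exact (ih _).trans (topDownStep_subset R a)

theorem hopCycleCover_topDownStep {R : Set V} (hR : HopCycleCover E k R) (v : V) :
    HopCycleCover E k (topDownStep E k R v) := by
  unfold topDownStep
  split
  · exact hR
  · rename_i hnone
    intro h w h3 hk hw
    by_contra! hmiss
    -- a cycle missed by `R \ {v}` still meets `R`, so it passes through `v`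
    obtain ⟨i, hi, hiR⟩ := hR h w h3 hk hw
    have hiv : w i = v := by simpa [hiR] using hmiss i hi
    exact hnone (hiv ▸ hasHopCycleThrough_of_isSimpleCycle h3 hk hw hmiss hi)

theorem hopCycleCover_foldl_topDownStep {R : Set V} (hR : HopCycleCover E k R) (l : List V) :
    HopCycleCover E k (l.foldl (topDownStep E k) R) := by
  induction l generalizing R with
  | nil => exact hR
  | cons a t ih => exact ih (hopCycleCover_topDownStep hR a)

theorem hasHopCycleThrough_of_mem_foldl_topDownStep {l : List V} {R : Set V} {v : V}
    (hvl : v ∈ l) (hv : v ∈ l.foldl (topDownStep E k) R) :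
    HasHopCycleThrough E k (l.foldl (topDownStep E k) R \ {v}) v := by
  induction l generalizing R with
  | nil => simp at hvl
  | cons a t ih =>
    rw [List.foldl_cons] at hv ⊢
    by_cases hvt : v ∈ t
    · exact ih hvt hv
    obtain rfl : v = a := (List.mem_cons.mp hvl).resolve_right hvt
    have hkept : v ∈ topDownStep E k R v := foldl_topDownStep_subset t _ hv
    have hcycle : HasHopCycleThrough E k (R \ {v}) v := by
      by_contra hc
      rw [topDownStep, if_neg hc] at hkept
      exact hkept.2 rfl
    exact hcycle.mono (Set.sdiff_subset_sdiff_left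
      ((foldl_topDownStep_subset t _).trans (topDownStep_subset R v)))

theorem stmt12_general (E : V → V → Prop) (k : ℕ) (l : List V)
    (hl : ∀ v : V, v ∈ l) :
    HopCycleCover E k (l.foldl (topDownStep E k) Set.univ) ∧
    ∀ v ∈ l.foldl (topDownStep E k) Set.univ,
      ¬ HopCycleCover E k (l.foldl (topDownStep E k) Set.univ \ {v}) := by
  have huniv : HopCycleCover E k Set.univ := fun _ _ _ _ _ => ⟨0, Nat.zero_le _, trivial⟩
  exact ⟨hopCycleCover_foldl_topDownStep huniv l, fun v hv =>
    (hasHopCycleThrough_of_mem_foldl_topDownStep (hl v) hv).not_hopCycleCover⟩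

/-- The top-down algorithm, starting from R = V(G) and processing every
vertex once, returns a feasible and minimal hop-constrained cycle cover. -/
theorem stmt12 (E : V → V → Prop) (k : ℕ) (hk : 3 ≤ k) (l : List V)
    (hl : ∀ v : V, v ∈ l) :
    HopCycleCover E k (l.foldl (topDownStep E k) Set.univ) ∧
    ∀ v ∈ l.foldl (topDownStep E k) Set.univ,
      ¬ HopCycleCover E k (l.foldl (topDownStep E k) Set.univ \ {v}) :=
  stmt12_general E k l hl
end

section
/- Let G be an undirected graph, and construct a directed graph G' as follows: replace each undirected edge {u, v} by directed edges; additionally for each edge {u, v} add a new vertex u' with bidirectional connections to u and v so that every edge of G gives rise to a directed 3-cycle on {u, v, u'} in G'. Then S ⊆ V(G) is a vertex cover of G if and only if there is a hop-constrained cycle cover of G' with k = 3 of size |S| (using only vertices of V(G)), and the minimum vertex cover size of G equals the minimum size of a 3-hop-constrained cycle cover of G'. -/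
variable {V : Type*}

/-! Every directed triangle of `G'` has two consecutive original vertices, adjacent in `G`, so a
vertex cover of `G` meets it. Conversely, the triangle `u → v → s(u, v) → u` forces a 3-hop cycle
cover to contain `u`, `v` or the auxiliary vertex `s(u, v)`, and the latter can be traded for an
endpoint of its edge without increasing the size; so the two minima agree. -/

def triangleWalk (a b c : V) : ℕ → V
  | 0 => a
  | 1 => b
  | 2 => c
  | _ => a

theorem isSimpleCycle_triangleWalk {E : V → V → Prop} {a b c : V} (hab : E a b) (hbc : E b c)
    (hca : E c a) (hne_ab : a ≠ b) (hne_bc : b ≠ c) (hne_ac : a ≠ c) :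
    IsSimpleCycle E 3 (triangleWalk a b c) := by
  refine ⟨⟨fun i hi => ?_, rfl⟩, fun i hi j hj hij => ?_⟩
  · interval_cases i <;> simpa [triangleWalk]
  · interval_cases i <;> interval_cases j <;> simp_all [triangleWalk]

theorem hopCycleCover_three_iff {E : V → V → Prop} {C : Set V} :
    HopCycleCover E 3 C ↔ ∀ a b c, E a b → E b c → E c a → a ≠ b → b ≠ c → a ≠ c →
      a ∈ C ∨ b ∈ C ∨ c ∈ C := by
  constructor
  · intro hC a b c hab hbc hca hne_ab hne_bc hne_ac
    obtain ⟨i, hi, hiC⟩ :=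
      hC 3 _ le_rfl le_rfl (isSimpleCycle_triangleWalk hab hbc hca hne_ab hne_bc hne_ac)
    interval_cases i <;> simp_all [triangleWalk]
  · rintro hC h w h3 h3' ⟨⟨hE, hclosed⟩, hinj⟩
    obtain rfl : h = 3 := le_antisymm h3' h3
    have hne : ∀ i < 3, ∀ j < 3, i ≠ j → w i ≠ w j := fun i hi j hj hij hw =>
      hij (hinj i hi j hj hw)
    rcases hC (w 0) (w 1) (w 2) (hE 0 (by norm_num)) (hE 1 (by norm_num))
        (hclosed ▸ hE 2 (by norm_num)) (hne 0 (by norm_num) 1 (by norm_num) (by norm_num))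
        (hne 1 (by norm_num) 2 (by norm_num) (by norm_num))
        (hne 0 (by norm_num) 2 (by norm_num) (by norm_num)) with h0 | h1 | h2
    · exact ⟨0, by norm_num, h0⟩
    · exact ⟨1, by norm_num, h1⟩
    · exact ⟨2, by norm_num, h2⟩

namespace SimpleGraph

variable (G : SimpleGraph V)

/-- The directed graph `G'` of the reduction; the vertex `.inr s(u, v)` is the auxiliary vertex
`u'` of the edge `uv`. -/
def triangleGadget : V ⊕ Sym2 V → V ⊕ Sym2 V → Prop
  | .inl u, .inl v => G.Adj u v
  | .inl u, .inr e => e ∈ G.edgeSet ∧ u ∈ e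
  | .inr e, .inl u => e ∈ G.edgeSet ∧ u ∈ e
  | .inr _, .inr _ => False

theorem triangleGadget_iff (x y : V ⊕ Sym2 V) : G.triangleGadget x y ↔
    (∃ u v, x = Sum.inl u ∧ y = Sum.inl v ∧ G.Adj u v) ∨
      (∃ u e, ((x = Sum.inl u ∧ y = Sum.inr e) ∨ (x = Sum.inr e ∧ y = Sum.inl u)) ∧
        e ∈ G.edgeSet ∧ u ∈ e) := by
  cases x <;> cases y <;> simp [triangleGadget]

theorem mem_of_hopCycleCover_triangleGadget {C : Set (V ⊕ Sym2 V)}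
    (hC : HopCycleCover G.triangleGadget 3 C) {u v : V} (huv : G.Adj u v) :
    .inl u ∈ C ∨ .inl v ∈ C ∨ .inr s(u, v) ∈ C := by
  have hgadget : s(u, v) ∈ G.edgeSet := huv
  exact hopCycleCover_three_iff.1 hC _ _ _ huv ⟨hgadget, Sym2.mem_mk_right u v⟩
    ⟨hgadget, Sym2.mem_mk_left u v⟩ (by simpa using huv.ne) (by simp) (by simp)

theorem isVertexCover_iff_hopCycleCover_triangleGadget (S : Set V) :
    G.IsVertexCover S ↔ HopCycleCover G.triangleGadget 3 (Sum.inl '' S) := by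
  refine ⟨fun hS => ?_, fun hC u v huv => by
    simpa using G.mem_of_hopCycleCover_triangleGadget hC huv⟩
  rw [hopCycleCover_three_iff]
  have hedge : ∀ u v, G.Adj u v →
      (.inl u : V ⊕ Sym2 V) ∈ Sum.inl '' S ∨ (.inl v : V ⊕ Sym2 V) ∈ Sum.inl '' S :=
    fun u v huv => (hS huv).imp (Set.mem_image_of_mem _) (Set.mem_image_of_mem _)
  -- no two consecutive vertices of a triangle are gadget vertices, so two consecutive ones
  -- are adjacent vertices of `G`
  rintro (u | e) (v | f) (w | g) huv hvw hwu - - - <;>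
    simp only [triangleGadget] at huv hvw hwu
  · exact (hedge u v huv).elim Or.inl (Or.inr ∘ Or.inl)
  · exact (hedge u v huv).elim Or.inl (Or.inr ∘ Or.inl)
  · exact (hedge w u hwu).elim (Or.inr ∘ Or.inr) Or.inl
  · exact (hedge v w hvw).elim (Or.inr ∘ Or.inl) (Or.inr ∘ Or.inr)

theorem isVertexCover_image_of_hopCycleCover_triangleGadget {T : Set (V ⊕ Sym2 V)}
    (hT : HopCycleCover G.triangleGadget 3 T) :
    G.IsVertexCover (Sum.elim id (fun e => e.out.1) '' T) := by
  intro u v huv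
  rcases G.mem_of_hopCycleCover_triangleGadget hT huv with hu | hv | he
  · exact .inl ⟨_, hu, rfl⟩
  · exact .inr ⟨_, hv, rfl⟩
  · rcases Sym2.mem_iff.1 (Sym2.out_fst_mem s(u, v)) with h | h
    · exact .inl ⟨_, he, h⟩
    · exact .inr ⟨_, he, h⟩

end SimpleGraph

/-- NP-hardness gadget. Given an undirected graph G, build the directed
graph G′ on V ⊕ Sym2 V where original vertices are joined by directed edges in both
directions whenever adjacent in G, and for each edge e = {u, v} of G the gadget vertex
e is joined bidirectionally to its two endpoints (so each edge of G yields directed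
3-cycles on {u, v, e}). Then S is a vertex cover of G iff Sum.inl '' S (of size |S|,
using only original vertices) is a 3-hop-constrained cycle cover of G′, and the
minimum vertex cover size of G equals the minimum 3-hop-constrained cycle cover size
of G′. -/
theorem stmt16 {V : Type*} [Finite V] (G : SimpleGraph V)
    (E' : (V ⊕ Sym2 V) → (V ⊕ Sym2 V) → Prop)
    (hE' : ∀ x y, E' x y ↔
      (∃ u v, x = Sum.inl u ∧ y = Sum.inl v ∧ G.Adj u v) ∨
      (∃ u e, ((x = Sum.inl u ∧ y = Sum.inr e) ∨ (x = Sum.inr e ∧ y = Sum.inl u)) ∧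
        e ∈ G.edgeSet ∧ u ∈ e)) :
    (∀ S : Set V, (∀ u v, G.Adj u v → u ∈ S ∨ v ∈ S) ↔
      HopCycleCover E' 3 (Sum.inl '' S)) ∧
    (∀ (S : Set V) (T : Set (V ⊕ Sym2 V)),
      (∀ u v, G.Adj u v → u ∈ S ∨ v ∈ S) →
      (∀ C : Set V, (∀ u v, G.Adj u v → u ∈ C ∨ v ∈ C) → S.ncard ≤ C.ncard) →
      HopCycleCover E' 3 T →
      (∀ C : Set (V ⊕ Sym2 V), HopCycleCover E' 3 C → T.ncard ≤ C.ncard) →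
      S.ncard = T.ncard) := by
  obtain rfl : E' = G.triangleGadget :=
    funext₂ fun x y => propext <| (hE' x y).trans (G.triangleGadget_iff x y).symm
  refine ⟨G.isVertexCover_iff_hopCycleCover_triangleGadget, fun S T hS hSmin hT hTmin => ?_⟩
  apply le_antisymm
  · calc S.ncard ≤ (Sum.elim id (fun e => e.out.1) '' T).ncard :=
          hSmin _ (G.isVertexCover_image_of_hopCycleCover_triangleGadget hT)
      _ ≤ T.ncard := Set.ncard_image_le
  · calc T.ncard ≤ (Sum.inl '' S).ncard :=
          hTmin _ ((G.isVertexCover_iff_hopCycleCover_triangleGadget S).1 hS)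
      _ = S.ncard := Set.ncard_image_of_injective S Sum.inl_injective
end

section
/- Suppose in the block-based DFS that when a vertex u is popped from the stack S without having found a cycle, u.block is set to k − |S| + 1 where |S| is the stack size at the time u was pushed. If u is later pushed again with stack size |S'| satisfying the admission condition |S'| + u.block ≤ k, then |S'| < |S|; hence the sequence of stack sizes at which u is pushed is strictly decreasing, bounding the number of pushes of u by k. -/
variable {V : Type*}

/-- `S ≤ k` keeps the truncated subtraction `k - S` in the block value exact. -/
lemma lt_of_add_block_le {k S S' : ℕ} (hS : S ≤ k) (hadmit : S' + (k - S + 1) ≤ k) :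
    S' < S := by
  omega

lemma le_of_injective_of_mem_Icc {n a b : ℕ} (d : Fin n → ℕ) (hd : Function.Injective d)
    (hmem : ∀ i, d i ∈ Finset.Icc a b) : n ≤ b + 1 - a := by
  simpa [Nat.card_Icc] using
    Finset.card_le_card_of_injOn (s := Finset.univ) d (fun i _ => hmem i) hd.injOn

theorem stmt19_general (k : ℕ) :
    (∀ S S' : ℕ, 1 ≤ S → S ≤ k → S' + (k - S + 1) ≤ k → S' < S) ∧
    (∀ (n : ℕ) (d : Fin n → ℕ), StrictAnti d → (∀ i, 1 ≤ d i ∧ d i ≤ k) → n ≤ k) := by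
  refine ⟨fun S S' _ hS hadmit => lt_of_add_block_le hS hadmit, fun n d hanti hbounds => ?_⟩
  simpa using le_of_injective_of_mem_Icc d hanti.injective fun i => Finset.mem_Icc.mpr (hbounds i)

/-- In the block-based DFS, if u is popped (failed) at stack depth S
(so u.block := k − S + 1) and later pushed again at depth S′ passing the admission
test S′ + u.block ≤ k, then S′ < S; hence the stack depths at successive pushes of u
are strictly decreasing and lie in [1, k], bounding the number of pushes of u by k. -/
theorem stmt19 (k : ℕ) (hk : 1 ≤ k) :
    (∀ S S' : ℕ, 1 ≤ S → S ≤ k → S' + (k - S + 1) ≤ k → S' < S) ∧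
    (∀ (n : ℕ) (d : Fin n → ℕ), StrictAnti d → (∀ i, 1 ≤ d i ∧ d i ≤ k) → n ≤ k) :=
  stmt19_general k
end
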